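/- arXiv:1301.3746 — 3 statements merged into one kernel-verified Lean document; each statement's English description precedes it below -/
import Mathlib

section
/- Suppose X is connected and locally path-connected. Then the space X̃ is connected and locally path-connected, and the map p : X̃ → X, p(⟨α⟩) = α(1), is a continuous open surjection. -/
open unitInterval

noncomputable section

/-- The homotopy class of a loop, as an element of the fundamental group. -/
def pathClass {X : Type*} [TopologicalSpace X] {x : X} (γ : Path x x) :
    FundamentalGroup X x :=
  FundamentalGroup.fromPath (X := TopCat.of X) (Quotient.mk (Path.Homotopic.setoid x x) γ)

/-- A continuous path in `X` starting at the basepoint `x`. -/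
structure RawPath (X : Type*) [TopologicalSpace X] (x : X) where
  toFun : C(unitInterval, X)
  source : toFun 0 = x

variable {X : Type*} [TopologicalSpace X] {x : X}

/-- The endpoint `α(1)` of a path starting at the basepoint. -/
def RawPath.endpt (α : RawPath X x) : X := α.toFun 1

/-- A raw path, as a bundled `Path` from `x` to its endpoint. -/
def RawPath.path (α : RawPath X x) : Path x α.endpt := ⟨α.toFun, α.source, rfl⟩

/-- The relation `α ∼ β` iff `α(1) = β(1)` and `[α · β⁻] ∈ H`. -/
def SpanierRel (H : Subgroup (FundamentalGroup X x)) (α β : RawPath X x) : Prop :=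
  ∃ hend : α.endpt = β.endpt,
    pathClass (α.path.trans (β.path.symm.cast hend rfl)) ∈ H

/-- The space `X̃`: paths starting at `x`, modulo `α ∼ β` iff `α(1) = β(1)`
and `[α · β⁻] ∈ H`. -/
def SpanierSpace (H : Subgroup (FundamentalGroup X x)) : Type _ :=
  Quot (SpanierRel H)

/-- The equivalence class `⟨α⟩ ∈ X̃` of a path `α` starting at `x`. -/
def SpanierSpace.mk (H : Subgroup (FundamentalGroup X x)) (α : RawPath X x) :
    SpanierSpace H :=
  Quot.mk _ α

/-- The endpoint projection `p : X̃ → X`, `p ⟨α⟩ = α(1)`. -/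
def spanierProj (H : Subgroup (FundamentalGroup X x)) : SpanierSpace H → X :=
  Quot.lift RawPath.endpt (fun _ _ hab => by obtain ⟨h, -⟩ := hab; exact h)

/-- The concatenation `α · γ` of a path `α` starting at `x` with a path `γ`
starting at `α(1)`. -/
def RawPath.extend (α : RawPath X x) {y : X} (γ : Path α.endpt y) : RawPath X x :=
  ⟨(α.path.trans γ).toContinuousMap, (α.path.trans γ).source'⟩

/-- The basic set `⟨α,U⟩ = {⟨α·γ⟩ : γ a continuous path in U with γ(0) = α(1)}`. -/
def basicSet (H : Subgroup (FundamentalGroup X x)) (α : RawPath X x) (U : Set X) :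
    Set (SpanierSpace H) :=
  {z | ∃ (y : X) (γ : Path α.endpt y), Set.range γ ⊆ U ∧ z = SpanierSpace.mk H (α.extend γ)}

/-- The topology on `X̃` generated by the basic sets `⟨α,U⟩` with `U` open
and `α(1) ∈ U`. -/
instance spanierTopology (H : Subgroup (FundamentalGroup X x)) :
    TopologicalSpace (SpanierSpace H) :=
  TopologicalSpace.generateFrom
    {S | ∃ (α : RawPath X x) (U : Set X), IsOpen U ∧ α.endpt ∈ U ∧ S = basicSet H α U}

/-- The subgroup-like subset `π(α,U) = [α]·i_#(π₁(U,α(1)))·[α]⁻¹` of `π₁(X,x)`: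
all classes `[α·γ·α⁻]` with `γ` a loop at `α(1)` inside `U`. -/
def piSet (α : RawPath X x) (U : Set X) : Set (FundamentalGroup X x) :=
  {g | ∃ γ : Path α.endpt α.endpt, Set.range γ ⊆ U ∧
    g = pathClass (α.path.trans (γ.trans α.path.symm))}

end

/-!
A basic set `⟨α, U⟩` is the set of endpoints of the lifts `s ↦ ⟨α · γ|[0,s]⟩` of paths `γ` in `U`
starting at `α(1)`. Such a lift is continuous: if it passes through a basic set `⟨β, W⟩` at time
`s₀`, then `⟨α · γ|[0,s₀], W⟩ ⊆ ⟨β, W⟩`, and for `s` near `s₀` the point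
`⟨α · γ|[0,s]⟩ = ⟨α · γ|[0,s₀] · γ|[s₀,s]⟩` lies in `⟨α · γ|[0,s₀], W⟩`. Hence every basic set is
path-connected, which makes `X̃` locally path-connected, and `X̃ = ⟨const_x, X⟩` is path-connected.
Finally `p` maps `⟨α, U⟩` onto the path component of `U` containing `α(1)`, which is open because
`X` is locally path-connected, and `⟨α, U⟩ ⊆ p⁻¹(U)`, which gives continuity.
-/

open Set Topology TopologicalSpace

namespace Path

variable {X : Type*} [TopologicalSpace X] {x y z : X}

noncomputable def loopDiff (p q : Path x y) : FundamentalGroup X x := pathClass (p.trans q.symm)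

theorem loopDiff_eq_trans_symm (p q : Path x y) :
    p.loopDiff q = (Homotopic.Quotient.mk p).trans (Homotopic.Quotient.mk q).symm := rfl

theorem loopDiff_congr {p p' q q' : Path x y} (hp : p.Homotopic p') (hq : q.Homotopic q') :
    p.loopDiff q = p'.loopDiff q' := by
  rw [loopDiff_eq_trans_symm, loopDiff_eq_trans_symm, Homotopic.Quotient.eq.2 hp,
    Homotopic.Quotient.eq.2 hq]

@[simp]
theorem loopDiff_self (p : Path x y) : p.loopDiff p = 1 := by
  rw [loopDiff_eq_trans_symm, Homotopic.Quotient.trans_symm]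
  rfl

theorem loopDiff_mul_loopDiff (p q r : Path x y) : q.loopDiff r * p.loopDiff q = p.loopDiff r := by
  rw [FundamentalGroup.mul_def, loopDiff_eq_trans_symm, loopDiff_eq_trans_symm,
    loopDiff_eq_trans_symm]
  grind

theorem loopDiff_inv (p q : Path x y) : (p.loopDiff q)⁻¹ = q.loopDiff p :=
  (eq_inv_of_mul_eq_one_left (by rw [loopDiff_mul_loopDiff, loopDiff_self])).symm

@[simp]
theorem loopDiff_trans_trans (p q : Path x y) (r : Path y z) :
    (p.trans r).loopDiff (q.trans r) = p.loopDiff q := by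
  rw [loopDiff_eq_trans_symm, loopDiff_eq_trans_symm, ← Homotopic.Quotient.mk_symm (q.trans r),
    trans_symm]
  simp only [Homotopic.Quotient.mk_trans, Homotopic.Quotient.mk_symm]
  grind

end Path

theorem RawPath.endpt_extend {X : Type*} [TopologicalSpace X] {x y : X} (α : RawPath X x)
    (γ : Path α.endpt y) : (α.extend γ).endpt = y :=
  (α.path.trans γ).target

section Relation

variable {X : Type*} [TopologicalSpace X] {x y : X} {H : Subgroup (FundamentalGroup X x)}

/-- Comparing `α` and `β` through any paths `p`, `q` with the same underlying maps, rather than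
through `α.path` and a cast of `β.path`, keeps `Path.cast` out of every later argument. -/
theorem spanierRel_iff {α β : RawPath X x} {p q : Path x y} (hp : ⇑p = ⇑α.toFun)
    (hq : ⇑q = ⇑β.toFun) : SpanierRel H α β ↔ p.loopDiff q ∈ H := by
  have hα : α.endpt = y := (congrFun hp 1).symm.trans p.target
  have hαβ : α.endpt = β.endpt := hα.trans ((congrFun hq 1).symm.trans q.target).symm
  subst hα
  obtain rfl : p = α.path := Path.ext hp
  have hq' : q.symm = β.path.symm.cast hαβ rfl := Path.ext (funext fun t => congrFun hq (σ t))
  rw [Path.loopDiff, hq']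
  exact ⟨fun ⟨_, h⟩ => h, fun h => ⟨hαβ, h⟩⟩

theorem spanierRel_equivalence : Equivalence (SpanierRel H) where
  refl α := (spanierRel_iff (p := α.path) (q := α.path) rfl rfl).2 (by
    rw [Path.loopDiff_self]
    exact H.one_mem)
  symm {α β} h := by
    obtain ⟨hαβ, -⟩ := id h
    rw [spanierRel_iff (p := α.path) (q := β.path.cast rfl hαβ) rfl rfl] at h
    rw [spanierRel_iff (p := β.path.cast rfl hαβ) (q := α.path) rfl rfl, ← Path.loopDiff_inv]
    exact H.inv_mem h
  trans {α β γ} h h' := by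
    obtain ⟨hαβ, -⟩ := id h
    obtain ⟨hβγ, -⟩ := id h'
    rw [spanierRel_iff (p := α.path) (q := β.path.cast rfl hαβ) rfl rfl] at h
    rw [spanierRel_iff (p := β.path.cast rfl hαβ) (q := γ.path.cast rfl (hαβ.trans hβγ)) rfl
      rfl] at h'
    rw [spanierRel_iff (p := α.path) (q := γ.path.cast rfl (hαβ.trans hβγ)) rfl rfl,
      ← Path.loopDiff_mul_loopDiff _ (β.path.cast rfl hαβ)]
    exact H.mul_mem h' h

end Relation

namespace SpanierSpace

variable {X : Type*} [TopologicalSpace X] {x y y' z : X} {H : Subgroup (FundamentalGroup X x)}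
  {α β : RawPath X x}

theorem mk_eq_mk_iff {p q : Path x y} (hp : ⇑p = ⇑α.toFun) (hq : ⇑q = ⇑β.toFun) :
    mk H α = mk H β ↔ p.loopDiff q ∈ H :=
  (spanierRel_equivalence.quot_mk_eq_iff α β).trans (spanierRel_iff hp hq)

theorem mk_eq_mk_of_homotopic {p q : Path x y} (hp : ⇑p = ⇑α.toFun) (hq : ⇑q = ⇑β.toFun)
    (h : p.Homotopic q) : mk H α = mk H β :=
  (mk_eq_mk_iff hp hq).2 (by
    rw [Path.loopDiff_congr h (.refl q), Path.loopDiff_self]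
    exact H.one_mem)

theorem mk_extend_refl (α : RawPath X x) : mk H (α.extend (Path.refl α.endpt)) = mk H α :=
  mk_eq_mk_of_homotopic (p := α.path.trans (.refl _)) (q := α.path) rfl rfl (.trans_refl _)

theorem mk_extend_congr {γ : Path α.endpt y} {δ : Path α.endpt y'} (h : ⇑γ = ⇑δ) :
    mk H (α.extend γ) = mk H (α.extend δ) := by
  obtain rfl : y = y' := γ.target.symm.trans ((congrFun h 1).trans δ.target)
  obtain rfl := Path.ext h
  rfl

theorem mk_extend_of_homotopic {γ δ : Path α.endpt y} (h : γ.Homotopic δ) :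
    mk H (α.extend γ) = mk H (α.extend δ) :=
  mk_eq_mk_of_homotopic (p := α.path.trans γ) (q := α.path.trans δ) rfl rfl (.hcomp (.refl _) h)

theorem mk_extend_extend (α : RawPath X x) (γ : Path α.endpt y) (δ : Path y z) :
    mk H ((α.extend γ).extend (δ.cast (α.endpt_extend γ) rfl)) =
      mk H (α.extend (γ.trans δ)) :=
  mk_eq_mk_of_homotopic (p := (α.path.trans γ).trans δ) (q := α.path.trans (γ.trans δ))
    rfl rfl (.trans_assoc _ _ _)

theorem mk_extend_eq_mk_extend (h : mk H α = mk H β) {γ : Path α.endpt y}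
    {δ : Path β.endpt y'} (hγδ : ⇑γ = ⇑δ) : mk H (α.extend γ) = mk H (β.extend δ) := by
  have hαβ : α.endpt = β.endpt := congrArg (spanierProj H) h
  rw [mk_extend_congr (δ := δ.cast hαβ rfl) hγδ]
  rw [mk_eq_mk_iff (p := α.path) (q := β.path.cast rfl hαβ) rfl rfl] at h
  rwa [mk_eq_mk_iff (p := α.path.trans (δ.cast hαβ rfl))
    (q := (β.path.cast rfl hαβ).trans (δ.cast hαβ rfl)) rfl rfl, Path.loopDiff_trans_trans]

end SpanierSpace

section BasicSets

open SpanierSpace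

variable {X : Type*} [TopologicalSpace X] {x : X} {H : Subgroup (FundamentalGroup X x)}
  {α β : RawPath X x} {U V : Set X}

theorem spanierProj_mk (α : RawPath X x) : spanierProj H (mk H α) = α.endpt := rfl

theorem mem_basicSet_self (hU : α.endpt ∈ U) : mk H α ∈ basicSet H α U :=
  ⟨_, .refl _, by simpa using hU, (mk_extend_refl α).symm⟩

theorem basicSet_subset_preimage : basicSet H α U ⊆ spanierProj H ⁻¹' U := by
  rintro _ ⟨y, γ, hγ, rfl⟩
  rw [mem_preimage, spanierProj_mk, RawPath.endpt_extend]
  exact hγ ⟨1, γ.target⟩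

theorem basicSet_mono (h : U ⊆ V) : basicSet H α U ⊆ basicSet H α V := by
  rintro _ ⟨y, γ, hγ, rfl⟩
  exact ⟨y, γ, hγ.trans h, rfl⟩

theorem basicSet_subset_of_mem (h : mk H β ∈ basicSet H α U) :
    basicSet H β U ⊆ basicSet H α U := by
  obtain ⟨y, γ, hγ, hβ⟩ := h
  rintro _ ⟨w, δ, hδ, rfl⟩
  have hy : y = β.endpt := (α.endpt_extend γ).symm.trans (congrArg (spanierProj H) hβ).symm
  have hrange : range (γ.trans (δ.cast hy rfl)) ⊆ U := by
    rw [Path.trans_range]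
    exact union_subset hγ hδ
  refine ⟨w, γ.trans (δ.cast hy rfl), hrange, ?_⟩
  rw [mk_extend_eq_mk_extend hβ (δ := (δ.cast hy rfl).cast (α.endpt_extend γ) rfl) rfl,
    mk_extend_extend]

theorem isOpen_basicSet (α : RawPath X x) (hU : IsOpen U) : IsOpen (basicSet H α U) := by
  by_cases hα : α.endpt ∈ U
  · exact isOpen_generateFrom_of_mem ⟨α, U, hU, hα, rfl⟩
  · convert isOpen_empty
    refine eq_empty_of_forall_notMem fun _ ⟨_, γ, hγ, _⟩ => hα ?_
    exact γ.source ▸ hγ (mem_range_self 0)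

theorem isTopologicalBasis_basicSet : IsTopologicalBasis
    {S : Set (SpanierSpace H) | ∃ α U, IsOpen U ∧ α.endpt ∈ U ∧ S = basicSet H α U} := by
  refine ⟨?_, ?_, rfl⟩
  · rintro _ ⟨α, U, hU, -, rfl⟩ _ ⟨α', U', hU', -, rfl⟩ _ ⟨hz, hz'⟩
    obtain ⟨y, γ, hγ, rfl⟩ := id hz
    have hβ : (α.extend γ).endpt ∈ U ∩ U' :=
      ⟨basicSet_subset_preimage hz, basicSet_subset_preimage hz'⟩
    refine ⟨_, ⟨_, _, hU.inter hU', hβ, rfl⟩, mem_basicSet_self hβ, subset_inter ?_ ?_⟩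
    · exact (basicSet_mono inter_subset_left).trans (basicSet_subset_of_mem hz)
    · exact (basicSet_mono inter_subset_right).trans (basicSet_subset_of_mem hz')
  · refine sUnion_eq_univ_iff.2 fun z => ?_
    obtain ⟨α, rfl⟩ := Quot.exists_rep z
    exact ⟨_, ⟨α, univ, isOpen_univ, trivial, rfl⟩, mem_basicSet_self trivial⟩

end BasicSets

namespace SpanierSpace

variable {X : Type*} [TopologicalSpace X] {x b : X} {H : Subgroup (FundamentalGroup X x)}
  {α : RawPath X x} {U : Set X}

theorem mk_extend_subpath_mem_basicSet (α : RawPath X x) (γ : Path α.endpt b) {s₀ s : I}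
    (hU : γ '' uIcc s₀ s ⊆ U) :
    mk H (α.extend ((γ.subpath 0 s).cast γ.source.symm rfl)) ∈
      basicSet H (α.extend ((γ.subpath 0 s₀).cast γ.source.symm rfl)) U := by
  refine ⟨γ s, (γ.subpath s₀ s).cast (RawPath.endpt_extend _ _) rfl, by simpa using hU, ?_⟩
  rw [mk_extend_extend]
  exact mk_extend_of_homotopic
    (.pathCast ⟨(Path.Homotopy.subpathTransSubpath γ 0 s₀ s).symm⟩ _ rfl)

theorem continuous_mk_extend_subpath (α : RawPath X x) (γ : Path α.endpt b) :
    Continuous fun s : I ↦ mk H (α.extend ((γ.subpath 0 s).cast γ.source.symm rfl)) := by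
  refine continuous_generateFrom_iff.2 ?_
  rintro _ ⟨β, W, hW, -, rfl⟩
  refine isOpen_iff_mem_nhds.2 fun s₀ hs₀ => ?_
  have hγW : γ ⁻¹' W ∈ 𝓝 s₀ := by
    refine γ.continuous.continuousAt.preimage_mem_nhds (hW.mem_nhds ?_)
    simpa [spanierProj_mk, RawPath.endpt_extend] using basicSet_subset_preimage hs₀
  filter_upwards [ordConnectedComponent_mem_nhds.2 hγW] with s hs
  exact basicSet_subset_of_mem hs₀
    (mk_extend_subpath_mem_basicSet α γ (image_subset_iff.2 (mem_ordConnectedComponent.1 hs)))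

noncomputable def liftPath (α : RawPath X x) (γ : Path α.endpt b) :
    Path (mk H α) (mk H (α.extend γ)) where
  toFun s := mk H (α.extend ((γ.subpath 0 s).cast γ.source.symm rfl))
  continuous_toFun := continuous_mk_extend_subpath α γ
  source' := (mk_extend_congr (by ext; simp)).trans (mk_extend_refl α)
  target' := mk_extend_congr (by ext; simp)

theorem range_liftPath_subset {γ : Path α.endpt b} (hγ : range γ ⊆ U) :
    range (liftPath (H := H) α γ) ⊆ basicSet H α U := by
  rintro _ ⟨s, rfl⟩
  refine ⟨γ s, _, ?_, rfl⟩
  simpa using (image_subset_range _ _).trans hγ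

end SpanierSpace

section Projection

open SpanierSpace

variable {X : Type*} [TopologicalSpace X] {x : X} {H : Subgroup (FundamentalGroup X x)}
  {α : RawPath X x} {U : Set X}

theorem isPathConnected_basicSet (hα : α.endpt ∈ U) : IsPathConnected (basicSet H α U) := by
  refine ⟨_, mem_basicSet_self hα, ?_⟩
  rintro _ ⟨y, γ, hγ, rfl⟩
  exact ⟨liftPath α γ, fun t => range_liftPath_subset hγ (mem_range_self t)⟩

theorem basicSet_refl_univ : basicSet H ⟨(Path.refl x).toContinuousMap, rfl⟩ univ = univ := by
  refine eq_univ_of_forall fun z => ?_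
  obtain ⟨α, rfl⟩ := Quot.exists_rep z
  exact ⟨_, α.path, subset_univ _, mk_eq_mk_of_homotopic (p := α.path)
    (q := (Path.refl x).trans α.path) rfl rfl (.symm (.refl_trans _))⟩

theorem image_spanierProj_basicSet (α : RawPath X x) (U : Set X) :
    spanierProj H '' basicSet H α U = pathComponentIn U α.endpt := by
  ext w
  constructor
  · rintro ⟨_, ⟨y, γ, hγ, rfl⟩, rfl⟩
    rw [spanierProj_mk, RawPath.endpt_extend]
    exact ⟨γ, fun t => hγ (mem_range_self t)⟩
  · rintro ⟨γ, hγ⟩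
    exact ⟨_, ⟨w, γ, range_subset_iff.2 hγ, rfl⟩, α.endpt_extend γ⟩

theorem continuous_spanierProj : Continuous (spanierProj H) := by
  refine continuous_def.2 fun U hU => isOpen_iff_mem_nhds.2 fun z hz => ?_
  obtain ⟨α, rfl⟩ := Quot.exists_rep z
  exact Filter.mem_of_superset ((isOpen_basicSet α hU).mem_nhds (mem_basicSet_self hz))
    basicSet_subset_preimage

theorem surjective_spanierProj [PathConnectedSpace X] : Function.Surjective (spanierProj H) :=
  fun y => ⟨mk H ⟨_, (PathConnectedSpace.somePath x y).source⟩,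
    (PathConnectedSpace.somePath x y).target⟩

end Projection

/-- If `X` is connected and locally path-connected, then `X̃` is connected and
locally path-connected, and `p : X̃ → X` is a continuous open surjection. -/
theorem spanierSpace_connected_locPathConnected_proj_continuous_open_surjective
    {X : Type*} [TopologicalSpace X] [ConnectedSpace X] [LocallyPathConnectedSpace X]
    {x : X} (H : Subgroup (FundamentalGroup X x)) :
    ConnectedSpace (SpanierSpace H) ∧ LocallyPathConnectedSpace (SpanierSpace H) ∧
      Continuous (spanierProj H) ∧ IsOpenMap (spanierProj H) ∧
      Function.Surjective (spanierProj H) := by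
  have : PathConnectedSpace X := pathConnectedSpace_iff_connectedSpace.2 ‹_›
  have : PathConnectedSpace (SpanierSpace H) :=
    pathConnectedSpace_iff_univ.2 (basicSet_refl_univ (H := H) ▸ isPathConnected_basicSet trivial)
  refine ⟨inferInstance, ?_, continuous_spanierProj, ?_, surjective_spanierProj⟩
  · refine .of_bases (fun _ => isTopologicalBasis_basicSet.nhds_hasBasis) ?_
    rintro _ _ ⟨⟨α, U, -, hα, rfl⟩, -⟩
    exact isPathConnected_basicSet hα
  · refine isTopologicalBasis_basicSet.isOpenMap_iff.2 ?_
    rintro _ ⟨α, U, hU, -, rfl⟩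
    rw [image_spanierProj_basicSet]
    exact hU.pathComponentIn _
end

section
/- If H is open in π₁(X,x) (i.e., h⁻¹(H) is open in Ω(X,x)), then for every u ∈ X the fiber p⁻¹(u) is a discrete subspace of X̃. -/
open unitInterval

/-!
Let `⟨β⟩` lie over `u`. Conjugating loops at `u` by `β` is continuous `Ω(X,u) → Ω(X,x)`, so the
loops `γ` at `u` with `[β·γ·β⁻] ∈ H` form a neighbourhood of the constant loop. In the
compact-open topology such a neighbourhood contains every loop with image in some open `U ∋ u`.
Then every `⟨β·γ⟩ ∈ ⟨β,U⟩` lying over `u` equals `⟨β⟩`, i.e. `⟨β,U⟩ ∩ p⁻¹(u) = {⟨β⟩}`.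
-/

open Set Filter Topology

theorem ContinuousMap.exists_isOpen_range_subset_of_mem_nhds_const
    {α β : Type*} [TopologicalSpace α] [TopologicalSpace β] {b : β} {T : Set C(α, β)}
    (hT : T ∈ 𝓝 (ContinuousMap.const α b)) :
    ∃ U : Set β, IsOpen U ∧ b ∈ U ∧ {f : C(α, β) | range f ⊆ U} ⊆ T := by
  have hmono : Monotone fun U : Set β => {f : C(α, β) | range f ⊆ U} :=
    fun _ _ hUV _ hf => hf.trans hUV
  have hle : (𝓝 b).lift' (fun U => {f : C(α, β) | range f ⊆ U}) ≤ 𝓝 (const α b) := by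
    rw [nhds_compactOpen]
    refine le_iInf₂ fun K _ => le_iInf₂ fun U hU => le_iInf fun hKU => le_principal_iff.2 ?_
    rcases K.eq_empty_or_nonempty with rfl | ⟨a, ha⟩
    · simpa only [mapsTo_empty, ofPred_true] using univ_mem
    · exact mem_of_superset (mem_lift' (hU.mem_nhds (hKU ha)))
        fun f hf _ _ => hf (mem_range_self _)
  obtain ⟨V, hV, hVT⟩ := (mem_lift'_sets hmono).1 (hle hT)
  obtain ⟨U, hUV, hU, hbU⟩ := mem_nhds_iff.1 hV
  exact ⟨U, hU, hbU, (hmono hUV).trans hVT⟩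

theorem Path.exists_isOpen_range_subset_of_mem_nhds_refl
    {X : Type*} [TopologicalSpace X] {u : X} {T : Set (Path u u)} (hT : T ∈ 𝓝 (Path.refl u)) :
    ∃ U : Set X, IsOpen U ∧ u ∈ U ∧ ∀ γ : Path u u, range γ ⊆ U → γ ∈ T := by
  rw [nhds_induced] at hT
  obtain ⟨T', hT', hT'T⟩ := mem_comap.1 hT
  obtain ⟨U, hU, huU, hUT'⟩ := ContinuousMap.exists_isOpen_range_subset_of_mem_nhds_const hT'
  exact ⟨U, hU, huU, fun γ hγ => hT'T (hUT' hγ)⟩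

section Spanier

variable {X : Type*} [TopologicalSpace X] {x : X} {H : Subgroup (FundamentalGroup X x)}

theorem pathClass_eq_of_homotopic {γ₁ γ₂ : Path x x} (h : γ₁.Homotopic γ₂) :
    pathClass γ₁ = pathClass γ₂ :=
  congrArg (FundamentalGroup.fromPath (X := TopCat.of X)) (Quotient.sound h)

theorem pathClass_trans_refl_trans_symm {y : X} (β : Path x y) :
    pathClass (β.trans ((Path.refl y).trans β.symm)) = 1 :=
  pathClass_eq_of_homotopic
    ⟨((Path.Homotopy.refl β).hcomp (Path.Homotopy.reflTrans β.symm)).trans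
      (Path.Homotopy.reflTransSymm β).symm⟩

theorem exists_isOpen_piSet_subset (hH : IsOpen {γ : Path x x | pathClass γ ∈ H})
    (β : RawPath X x) : ∃ U : Set X, IsOpen U ∧ β.endpt ∈ U ∧ piSet β U ⊆ H := by
  have hconj : Continuous fun γ : Path β.endpt β.endpt => β.path.trans (γ.trans β.path.symm) :=
    continuous_const.path_trans (continuous_id.path_trans continuous_const)
  have hrefl : pathClass (β.path.trans ((Path.refl β.endpt).trans β.path.symm)) ∈ H := by
    rw [pathClass_trans_refl_trans_symm]
    exact H.one_mem
  obtain ⟨U, hU, hβU, hUH⟩ :=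
    Path.exists_isOpen_range_subset_of_mem_nhds_refl ((hH.preimage hconj).mem_nhds hrefl)
  refine ⟨U, hU, hβU, ?_⟩
  rintro _ ⟨γ, hγU, rfl⟩
  exact hUH γ hγU

namespace SpanierSpace

theorem mk_extend_eq_of_mem (β : RawPath X x) {γ : Path β.endpt β.endpt}
    (hγ : pathClass (β.path.trans (γ.trans β.path.symm)) ∈ H) :
    mk H (β.extend γ) = mk H β := by
  refine Quot.sound ⟨(β.path.trans γ).target', ?_⟩
  rwa [← pathClass_eq_of_homotopic ⟨Path.Homotopy.transAssoc β.path γ β.path.symm⟩] at hγ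

theorem mk_mem_basicSet {β : RawPath X x} {U : Set X} (hβU : β.endpt ∈ U) :
    mk H β ∈ basicSet H β U := by
  refine ⟨β.endpt, Path.refl β.endpt, ?_, ?_⟩
  · rintro _ ⟨t, rfl⟩
    exact hβU
  · refine (mk_extend_eq_of_mem β ?_).symm
    rw [pathClass_trans_refl_trans_symm]
    exact H.one_mem

theorem isOpen_basicSet {β : RawPath X x} {U : Set X} (hU : IsOpen U) (hβU : β.endpt ∈ U) :
    IsOpen (basicSet H β U) :=
  TopologicalSpace.isOpen_generateFrom_of_mem ⟨β, U, hU, hβU, rfl⟩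

theorem basicSet_inter_preimage_spanierProj_eq_singleton {β : RawPath X x} {U : Set X}
    (hβU : β.endpt ∈ U) (hUH : piSet β U ⊆ H) :
    basicSet H β U ∩ spanierProj H ⁻¹' {β.endpt} = {mk H β} := by
  refine Subset.antisymm ?_ fun _ h => h ▸ ⟨mk_mem_basicSet hβU, rfl⟩
  rintro _ ⟨⟨y, γ, hγU, rfl⟩, hy⟩
  obtain rfl : y = β.endpt := (β.path.trans γ).target'.symm.trans hy
  exact mk_extend_eq_of_mem β (hUH ⟨γ, hγU, rfl⟩)

end SpanierSpace

end Spanier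

/-- If `H` is an open subgroup of `π₁(X,x)` (i.e. the preimage of `H` under the map
`h : Ω(X,x) → π₁(X,x)` is open in the compact-open topology on loops at `x`), then
every fiber `p⁻¹(u)` of `p : X̃ → X` is a discrete subspace of `X̃`. -/
theorem spanier_fiber_discrete_of_open
    {X : Type*} [TopologicalSpace X] {x : X} (H : Subgroup (FundamentalGroup X x))
    (hH : IsOpen {γ : Path x x | pathClass γ ∈ H}) (u : X) :
    DiscreteTopology (spanierProj H ⁻¹' {u} : Set (SpanierSpace H)) := by
  rw [discreteTopology_subtype_iff']
  intro z hz
  obtain ⟨β, rfl⟩ := Quot.exists_rep z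
  obtain rfl : β.endpt = u := hz
  obtain ⟨U, hU, hβU, hUH⟩ := exists_isOpen_piSet_subset hH β
  exact ⟨basicSet H β U, SpanierSpace.isOpen_basicSet hU hβU,
    SpanierSpace.basicSet_inter_preimage_spanierProj_eq_singleton hβU hUH⟩
end

section
/- Suppose X is connected and locally path-connected and H is a normal subgroup of π₁(X,x) which is open (h⁻¹(H) is open in Ω(X,x)). Then p : X̃ → X is a covering map, i.e., every point of X has an open neighborhood evenly covered by p. -/
open unitInterval

/-- `IsCoveringMap` with its meaning in the older Mathlib: every fiber is discrete and every
point lies in the base set of a trivialization with that fiber. -/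
def OldIsCoveringMap {E Y : Type*} [TopologicalSpace E] [TopologicalSpace Y] (f : E → Y) :
    Prop :=
  ∀ y : Y, DiscreteTopology (f ⁻¹' {y}) ∧
    ∃ t : Bundle.Trivialization (f ⁻¹' {y}) f, y ∈ t.baseSet

/-!
Openness of `H` gives every point `y` an open neighbourhood `U` with `π(A, U) ⊆ H` for one path
`A` from `x` to `y`: a neighbourhood of the constant loop in the compact-open topology contains
every loop with image in some open set around `y`. Normality of `H` transfers this to every path
ending at `y`, and it survives passing to the path component `V` of `U` containing `y`. Over `V`
the basic sets `⟨q, V⟩`, `q` ending at `y`, are the sheets: since loops of `V` conjugated by `q`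
lie in `H`, each maps injectively and (as `V` is path-connected) onto `V`; two of them sharing a
point coincide; and they cover `p⁻¹(V)`. As `p` is continuous and open (`X` being locally
path-connected), each sheet is homeomorphic to `V`.
-/

open CategoryTheory Topology

lemma ContinuousMap.exists_isOpen_forall_range_subset_mem {α β : Type*} [TopologicalSpace α]
    [TopologicalSpace β] {y : β} {T : Set C(α, β)} (hT : T ∈ 𝓝 (ContinuousMap.const α y)) :
    ∃ U : Set β, IsOpen U ∧ y ∈ U ∧ ∀ g : C(α, β), Set.range g ⊆ U → g ∈ T := by
  have hmono : Monotone fun U : Set β => {g : C(α, β) | Set.range g ⊆ U} :=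
    fun U V hUV g hg => hg.trans hUV
  suffices h : (𝓝 y).lift' (fun U => {g : C(α, β) | Set.range g ⊆ U}) ≤ 𝓝 (.const α y) by
    obtain ⟨U, hU, hUT⟩ := (Filter.mem_lift'_sets hmono).1 (h hT)
    obtain ⟨V, hVU, hV, hyV⟩ := mem_nhds_iff.1 hU
    exact ⟨V, hV, hyV, fun g hg => hUT (hg.trans hVU)⟩
  simp only [ContinuousMap.nhds_compactOpen, le_iInf_iff, Filter.le_principal_iff]
  intro K _ U hU hKU
  rw [Filter.mem_lift'_sets hmono]
  -- a subbasic neighbourhood `{g | MapsTo g K U}` of the constant map has `K = ∅` or `y ∈ U`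
  rcases K.eq_empty_or_nonempty with rfl | ⟨k, hk⟩
  · exact ⟨Set.univ, Filter.univ_mem, fun g _ => Set.mapsTo_empty _ _⟩
  · exact ⟨U, hU.mem_nhds (hKU hk), fun g hg t _ => hg (Set.mem_range_self t)⟩

section

variable {X : Type*} [TopologicalSpace X] {x : X}

def homOfPath {u v : X} (p : Path u v) :
    FundamentalGroupoid.mk u ⟶ FundamentalGroupoid.mk v :=
  Path.Homotopic.Quotient.mk p

section homOfPath

variable {u v w : X}

@[simp] lemma homOfPath_trans (p : Path u v) (q : Path v w) :
    homOfPath (p.trans q) = homOfPath p ≫ homOfPath q :=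
  rfl

@[simp] lemma homOfPath_symm (p : Path u v) : homOfPath p.symm = inv (homOfPath p) := by
  rw [← Groupoid.inv_eq_inv]; rfl

@[simp] lemma homOfPath_refl (u : X) : homOfPath (Path.refl u) = 𝟙 _ := rfl

lemma homOfPath_cast_comp_inv (p q : Path x v) (h : u = v) :
    homOfPath (p.cast rfl h) ≫ inv (homOfPath (q.cast rfl h)) =
      homOfPath p ≫ inv (homOfPath q) := by
  subst h; rfl

lemma pathClass_eq_homOfPath (γ : Path x x) : pathClass γ = homOfPath γ := rfl

end homOfPath

namespace FundamentalGroup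

lemma inv_eq_inv (g : FundamentalGroup X x) : g⁻¹ = inv (g : FundamentalGroupoid.mk x ⟶ _) :=
  Groupoid.inv_eq_inv g

variable {H : Subgroup (FundamentalGroup X x)}

lemma comp_mem {f g : FundamentalGroupoid.mk x ⟶ FundamentalGroupoid.mk x}
    (hf : f ∈ H) (hg : g ∈ H) : f ≫ g ∈ H :=
  H.mul_mem hg hf

lemma inv_mem {f : FundamentalGroupoid.mk x ⟶ FundamentalGroupoid.mk x}
    (hf : f ∈ H) : inv f ∈ H := by
  rw [← inv_eq_inv]; exact H.inv_mem hf

lemma conj_mem (hn : H.Normal) {f : FundamentalGroupoid.mk x ⟶ FundamentalGroupoid.mk x}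
    (hf : f ∈ H) (g : FundamentalGroupoid.mk x ⟶ FundamentalGroupoid.mk x) :
    g ≫ f ≫ inv g ∈ H := by
  simpa [End.mul_def, inv_eq_inv] using hn.conj_mem _ hf (inv g)

end FundamentalGroup

def RawPath.ofPath {u : X} (p : Path x u) : RawPath X x := ⟨p.toContinuousMap, p.source⟩

lemma spanierRel_iff_s11 (H : Subgroup (FundamentalGroup X x)) (α β : RawPath X x) :
    SpanierRel H α β ↔ ∃ h : α.endpt = β.endpt,
      homOfPath α.path ≫ inv (homOfPath (β.path.cast rfl h)) ∈ H := by
  simp only [← homOfPath_symm, ← homOfPath_trans]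
  rfl

namespace SpanierSpace

variable (H : Subgroup (FundamentalGroup X x))

/-- Classes and basic sets are indexed by `p : Path x u` rather than by a `RawPath`, so that the
endpoint is part of the type and concatenations need no casts. -/
def ofPath {u : X} (p : Path x u) : SpanierSpace H := mk H (.ofPath p)

lemma spanierRel_equivalence : Equivalence (SpanierRel H) where
  refl α := (spanierRel_iff_s11 H α α).2 ⟨rfl, by simpa using H.one_mem⟩
  symm {α β} h := by
    obtain ⟨hαβ, h⟩ := (spanierRel_iff_s11 H α β).1 h
    refine (spanierRel_iff_s11 H β α).2 ⟨hαβ.symm, ?_⟩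
    have e := homOfPath_cast_comp_inv (β.path.cast rfl hαβ) α.path hαβ.symm
    exact (congrArg (· ∈ H) e).mpr (by simpa using FundamentalGroup.inv_mem h)
  trans {α β γ} h₁ h₂ := by
    obtain ⟨hαβ, h₁⟩ := (spanierRel_iff_s11 H α β).1 h₁
    obtain ⟨hβγ, h₂⟩ := (spanierRel_iff_s11 H β γ).1 h₂
    refine (spanierRel_iff_s11 H α γ).2 ⟨hαβ.trans hβγ, ?_⟩
    rw [← homOfPath_cast_comp_inv β.path (γ.path.cast rfl hβγ) hαβ] at h₂
    have := FundamentalGroup.comp_mem h₁ h₂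
    simp only [Category.assoc, IsIso.inv_hom_id_assoc] at this
    exact this

variable {H} {u v w : X}

lemma ofPath_eq_ofPath_iff (p q : Path x u) :
    ofPath H p = ofPath H q ↔ homOfPath p ≫ inv (homOfPath q) ∈ H := by
  refine Quot.eq.trans ((spanierRel_equivalence H).eqvGen_iff.trans ?_)
  rw [← homOfPath_symm, ← homOfPath_trans]
  exact ⟨fun ⟨_, h⟩ => h, fun h => ⟨p.target.trans q.target.symm, h⟩⟩

lemma ofPath_eq_ofPath_of_homOfPath_eq {p q : Path x u} (h : homOfPath p = homOfPath q) :
    ofPath H p = ofPath H q :=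
  (ofPath_eq_ofPath_iff p q).2 (by simpa [h] using H.one_mem)

lemma ofPath_trans_congr {p q : Path x u} (h : ofPath H p = ofPath H q) (γ : Path u v) :
    ofPath H (p.trans γ) = ofPath H (q.trans γ) := by
  rw [ofPath_eq_ofPath_iff] at h ⊢
  simpa using h

@[simp] lemma spanierProj_ofPath (p : Path x u) : spanierProj H (ofPath H p) = u := p.target

lemma exists_ofPath_eq (z : SpanierSpace H) : ∃ (u : X) (p : Path x u), ofPath H p = z := by
  induction z using Quot.ind with
  | mk α => exact ⟨_, α.path, rfl⟩

lemma exists_ofPath_eq_of_spanierProj_eq {z : SpanierSpace H} (hz : spanierProj H z = u) :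
    ∃ p : Path x u, ofPath H p = z := by
  obtain ⟨v, p, rfl⟩ := exists_ofPath_eq z
  rw [spanierProj_ofPath] at hz
  subst hz
  exact ⟨p, rfl⟩

lemma eq_of_ofPath_eq {p : Path x u} {q : Path x v} (h : ofPath H p = ofPath H q) : u = v := by
  simpa using congrArg (spanierProj H) h

variable (H) in
def nbhd (p : Path x u) (U : Set X) : Set (SpanierSpace H) :=
  {z | ∃ (w : X) (γ : Path u w), Set.range γ ⊆ U ∧ z = ofPath H (p.trans γ)}

variable {p q : Path x u} {U W W' : Set X}

lemma basicSet_eq_nbhd (α : RawPath X x) (U : Set X) : basicSet H α U = nbhd H α.path U := rfl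

lemma nbhd_cast (p : Path x u) (h : v = u) (U : Set X) : nbhd H (p.cast rfl h) U = nbhd H p U := by
  subst h; rfl

lemma basicSet_ofPath (p : Path x u) (U : Set X) : basicSet H (.ofPath p) U = nbhd H p U :=
  nbhd_cast p p.target U

lemma mem_nbhd_self (hu : u ∈ U) : ofPath H p ∈ nbhd H p U :=
  ⟨u, .refl u, by simpa using hu, ofPath_eq_ofPath_of_homOfPath_eq (by simp)⟩

lemma image_spanierProj_nbhd (p : Path x u) (U : Set X) :
    spanierProj H '' nbhd H p U = pathComponentIn U u := by
  ext w
  constructor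
  · rintro ⟨_, ⟨w, γ, hγ, rfl⟩, rfl⟩
    rw [spanierProj_ofPath]
    exact ⟨γ, fun t => hγ ⟨t, rfl⟩⟩
  · rintro ⟨γ, hγ⟩
    exact ⟨_, ⟨w, γ, Set.range_subset_iff.2 hγ, rfl⟩, spanierProj_ofPath _⟩

lemma spanierProj_mem_of_mem_nbhd {z : SpanierSpace H} (hz : z ∈ nbhd H p U) :
    spanierProj H z ∈ U :=
  pathComponentIn_subset (image_spanierProj_nbhd p U ▸ Set.mem_image_of_mem _ hz)

lemma nbhd_congr (h : ofPath H p = ofPath H q) (U : Set X) : nbhd H p U = nbhd H q U :=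
  Set.ext fun _ => exists₂_congr fun _ γ => and_congr_right' (by rw [ofPath_trans_congr h γ])

lemma ofPath_trans_trans (p : Path x u) (γ : Path u v) (γ' : Path v w) :
    ofPath H ((p.trans γ).trans γ') = ofPath H (p.trans (γ.trans γ')) :=
  ofPath_eq_ofPath_of_homOfPath_eq (by simp)

lemma nbhd_subset_of_mem {q : Path x v} (hWW : W' ⊆ W) (hq : ofPath H q ∈ nbhd H p W) :
    nbhd H q W' ⊆ nbhd H p W := by
  obtain ⟨w, γ, hγ, hqγ⟩ := hq
  obtain rfl := eq_of_ofPath_eq hqγ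
  rintro _ ⟨w', γ', hγ', rfl⟩
  refine ⟨w', γ.trans γ', ?_, by rw [ofPath_trans_congr hqγ, ofPath_trans_trans]⟩
  rw [Path.trans_range]
  exact Set.union_subset hγ (hγ'.trans hWW)

lemma mem_nbhd_symm {q : Path x v} (hq : ofPath H q ∈ nbhd H p U) : ofPath H p ∈ nbhd H q U := by
  obtain ⟨w, γ, hγ, hqγ⟩ := hq
  obtain rfl := eq_of_ofPath_eq hqγ
  refine ⟨u, γ.symm, by rwa [Path.symm_range], ?_⟩
  rw [ofPath_trans_congr hqγ, ofPath_trans_trans]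
  exact ofPath_eq_ofPath_of_homOfPath_eq (by simp)

lemma nbhd_eq_of_mem {q : Path x v} (hq : ofPath H q ∈ nbhd H p U) : nbhd H q U = nbhd H p U :=
  (nbhd_subset_of_mem subset_rfl hq).antisymm (nbhd_subset_of_mem subset_rfl (mem_nbhd_symm hq))

variable (H) in
lemma isTopologicalBasis_basicSet : TopologicalSpace.IsTopologicalBasis
    {S : Set (SpanierSpace H) | ∃ (α : RawPath X x) (U : Set X),
      IsOpen U ∧ α.endpt ∈ U ∧ S = basicSet H α U} := by
  refine ⟨?_, ?_, rfl⟩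
  · rintro _ ⟨α, W₁, hW₁, -, rfl⟩ _ ⟨β, W₂, hW₂, -, rfl⟩ z ⟨hz₁, hz₂⟩
    obtain ⟨v, q, rfl⟩ := exists_ofPath_eq z
    have hq : v ∈ W₁ ∩ W₂ := by
      simpa using And.intro (spanierProj_mem_of_mem_nbhd hz₁) (spanierProj_mem_of_mem_nbhd hz₂)
    refine ⟨nbhd H q (W₁ ∩ W₂), ⟨.ofPath q, W₁ ∩ W₂, hW₁.inter hW₂, ?_,
      (basicSet_ofPath q _).symm⟩, mem_nbhd_self hq, Set.subset_inter
        (nbhd_subset_of_mem Set.inter_subset_left hz₁)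
        (nbhd_subset_of_mem Set.inter_subset_right hz₂)⟩
    show q 1 ∈ W₁ ∩ W₂
    rwa [q.target]
  · refine Set.sUnion_eq_univ_iff.2 fun z => ?_
    induction z using Quot.ind with
    | mk α => exact ⟨_, ⟨α, Set.univ, isOpen_univ, trivial, rfl⟩, mem_nbhd_self trivial⟩

lemma isOpen_nbhd (hU : IsOpen U) (hu : u ∈ U) (p : Path x u) : IsOpen (nbhd H p U) := by
  rw [← basicSet_ofPath]
  refine (isTopologicalBasis_basicSet H).isOpen ⟨.ofPath p, U, hU, ?_, rfl⟩
  show p 1 ∈ U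
  rwa [p.target]

variable (H) in
lemma continuous_spanierProj : Continuous (spanierProj H) := by
  refine continuous_def.2 fun V hV => isOpen_iff_forall_mem_open.2 fun z hz => ?_
  obtain ⟨v, q, rfl⟩ := exists_ofPath_eq z
  rw [Set.mem_preimage, spanierProj_ofPath] at hz
  exact ⟨nbhd H q V, fun _ => spanierProj_mem_of_mem_nbhd, isOpen_nbhd hV hz q, mem_nbhd_self hz⟩

variable (H) in
lemma isOpenMap_spanierProj [LocallyPathConnectedSpace X] : IsOpenMap (spanierProj H) := by
  refine (isTopologicalBasis_basicSet H).isOpenMap_iff.2 ?_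
  rintro _ ⟨α, U, hU, -, rfl⟩
  rw [basicSet_eq_nbhd, image_spanierProj_nbhd]
  exact hU.pathComponentIn _

variable {y : X} {V : Set X}

variable (H) in
/-- Spanier's condition `π(p, U) ⊆ H`, in the notation of `piSet`. -/
def PiSubset (p : Path x u) (U : Set X) : Prop :=
  ∀ ℓ : Path u u, Set.range ℓ ⊆ U →
    homOfPath p ≫ homOfPath ℓ ≫ inv (homOfPath p) ∈ H

lemma PiSubset.mono (h : PiSubset H p U) (hVU : V ⊆ U) : PiSubset H p V :=
  fun ℓ hℓ => h ℓ (hℓ.trans hVU)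

lemma PiSubset.of_normal (hn : H.Normal) (h : PiSubset H p U) (q : Path x u) :
    PiSubset H q U := fun ℓ hℓ => by
  simpa using FundamentalGroup.conj_mem hn (h ℓ hℓ) (homOfPath q ≫ inv (homOfPath p))

lemma exists_isOpen_piSubset (hopen : IsOpen {γ : Path x x | pathClass γ ∈ H}) (p : Path x u) :
    ∃ U, IsOpen U ∧ u ∈ U ∧ PiSubset H p U := by
  have hΦ : Continuous fun ℓ : Path u u => p.trans (ℓ.trans p.symm) :=
    continuous_const.path_trans (continuous_id.path_trans continuous_const)
  have hmem : (fun ℓ : Path u u => p.trans (ℓ.trans p.symm)) ⁻¹' {γ | pathClass γ ∈ H} ∈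
      𝓝 (Path.refl u) :=
    (hopen.preimage hΦ).mem_nhds (by simpa [pathClass_eq_homOfPath] using H.one_mem)
  rw [nhds_induced, Filter.mem_comap] at hmem
  obtain ⟨T, hT, hTsub⟩ := hmem
  obtain ⟨U, hU, huU, hUT⟩ := ContinuousMap.exists_isOpen_forall_range_subset_mem hT
  exact ⟨U, hU, huU, fun ℓ hℓ => by
    simpa [pathClass_eq_homOfPath] using hTsub (hUT (ℓ : C(I, X)) hℓ)⟩

lemma ofPath_trans_eq_of_piSubset (hp : PiSubset H p U) {γ γ' : Path u w}
    (hγ : Set.range γ ⊆ U) (hγ' : Set.range γ' ⊆ U) :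
    ofPath H (p.trans γ) = ofPath H (p.trans γ') := by
  rw [ofPath_eq_ofPath_iff]
  have := hp (γ.trans γ'.symm) (by
    rw [Path.trans_range, Path.symm_range]; exact Set.union_subset hγ hγ')
  simpa using this

lemma injOn_spanierProj_nbhd (hp : PiSubset H p U) : Set.InjOn (spanierProj H) (nbhd H p U) := by
  rintro _ ⟨w, γ, hγ, rfl⟩ _ ⟨w', γ', hγ', rfl⟩ h
  simp only [spanierProj_ofPath] at h
  subst h
  exact ofPath_trans_eq_of_piSubset hp hγ hγ'

variable (H) in
structure IsGoodNbhd (y : X) (V : Set X) : Prop where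
  isOpen : IsOpen V
  isPathConnected : IsPathConnected V
  mem : y ∈ V
  piSubset : ∀ q : Path x y, PiSubset H q V

lemma exists_isGoodNbhd [LocallyPathConnectedSpace X] (hn : H.Normal)
    (hopen : IsOpen {γ : Path x x | pathClass γ ∈ H}) (A : Path x y) :
    ∃ V, IsGoodNbhd H y V := by
  obtain ⟨U, hU, hyU, hAU⟩ := exists_isOpen_piSubset hopen A
  exact ⟨pathComponentIn U y, ⟨hU.pathComponentIn y, isPathConnected_pathComponentIn hyU,
    mem_pathComponentIn_self hyU, fun q => (hAU.of_normal hn q).mono pathComponentIn_subset⟩⟩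

noncomputable def fiberPath (i : spanierProj H ⁻¹' {y}) : Path x y :=
  (exists_ofPath_eq_of_spanierProj_eq i.2).choose

lemma ofPath_fiberPath (i : spanierProj H ⁻¹' {y}) : ofPath H (fiberPath i) = i :=
  (exists_ofPath_eq_of_spanierProj_eq i.2).choose_spec

namespace IsGoodNbhd

lemma image_spanierProj_nbhd (hV : IsGoodNbhd H y V) (q : Path x y) :
    spanierProj H '' nbhd H q V = V := by
  rw [SpanierSpace.image_spanierProj_nbhd]
  exact pathComponentIn_subset.antisymm
    (hV.isPathConnected.subset_pathComponentIn hV.mem subset_rfl)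

lemma isOpen_iff_isOpen_preimage_inter_nbhd [LocallyPathConnectedSpace X]
    (hV : IsGoodNbhd H y V) (q : Path x y) {W : Set X} (hW : W ⊆ V) :
    IsOpen W ↔ IsOpen (spanierProj H ⁻¹' W ∩ nbhd H q V) := by
  refine ⟨fun h => (h.preimage (continuous_spanierProj H)).inter
    (isOpen_nbhd hV.isOpen hV.mem q), fun h => ?_⟩
  have := isOpenMap_spanierProj H _ h
  rwa [Set.image_preimage_inter, hV.image_spanierProj_nbhd, Set.inter_eq_left.2 hW] at this

lemma ofPath_eq_of_mem_nbhd (hV : IsGoodNbhd H y V) {q q' : Path x y} {z : SpanierSpace H}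
    (hz : z ∈ nbhd H q V) (hz' : z ∈ nbhd H q' V) : ofPath H q = ofPath H q' := by
  obtain ⟨v, r, rfl⟩ := exists_ofPath_eq z
  have hqq' : nbhd H q V = nbhd H q' V := (nbhd_eq_of_mem hz).symm.trans (nbhd_eq_of_mem hz')
  exact injOn_spanierProj_nbhd (hV.piSubset q) (mem_nbhd_self hV.mem)
    (hqq' ▸ mem_nbhd_self hV.mem) (by simp)

lemma exists_mem_nbhd (hV : IsGoodNbhd H y V) {z : SpanierSpace H} (hz : spanierProj H z ∈ V) :
    ∃ q : Path x y, z ∈ nbhd H q V := by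
  obtain ⟨v, r, rfl⟩ := exists_ofPath_eq z
  rw [spanierProj_ofPath] at hz
  have hjoin := hV.isPathConnected.joinedIn v hz y hV.mem
  exact ⟨r.trans hjoin.somePath,
    mem_nbhd_symm ⟨y, _, Set.range_subset_iff.2 hjoin.somePath_mem, rfl⟩⟩

lemma discreteTopology_fiber (hV : IsGoodNbhd H y V) :
    DiscreteTopology (spanierProj H ⁻¹' {y}) := by
  refine discreteTopology_iff_isOpen_singleton.2 fun ⟨z, hz⟩ => ?_
  obtain ⟨q, rfl⟩ := exists_ofPath_eq_of_spanierProj_eq hz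
  have : ({⟨ofPath H q, hz⟩} : Set (spanierProj H ⁻¹' {y})) = Subtype.val ⁻¹' nbhd H q V := by
    ext ⟨z', hz'⟩
    simp only [Set.mem_singleton_iff, Set.mem_preimage, Subtype.mk.injEq]
    exact ⟨fun h => h ▸ mem_nbhd_self hV.mem, fun h => injOn_spanierProj_nbhd (hV.piSubset q) h
      (mem_nbhd_self hV.mem) ((hz' : spanierProj H z' = y).trans (spanierProj_ofPath q).symm)⟩
  rw [this]
  exact (isOpen_nbhd hV.isOpen hV.mem q).preimage continuous_subtype_val

lemma pairwise_disjoint_nbhd_fiberPath (hV : IsGoodNbhd H y V) :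
    Pairwise (Function.onFun Disjoint fun i : spanierProj H ⁻¹' {y} => nbhd H (fiberPath i) V) :=
  fun i j hij => Set.disjoint_left.2 fun _ hzi hzj => hij <| Subtype.ext <| by
    rw [← ofPath_fiberPath i, ← ofPath_fiberPath j]
    exact hV.ofPath_eq_of_mem_nbhd hzi hzj

lemma preimage_subset_iUnion_nbhd_fiberPath (hV : IsGoodNbhd H y V) :
    spanierProj H ⁻¹' V ⊆ ⋃ i : spanierProj H ⁻¹' {y}, nbhd H (fiberPath i) V := fun z hz => by
  obtain ⟨q, hq⟩ := hV.exists_mem_nbhd hz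
  refine Set.mem_iUnion.2 ⟨⟨ofPath H q, spanierProj_ofPath q⟩, ?_⟩
  rwa [nbhd_congr (ofPath_fiberPath _)]

noncomputable def trivialization [LocallyPathConnectedSpace X] (hV : IsGoodNbhd H y V)
    (A : Path x y) : Bundle.Trivialization (spanierProj H ⁻¹' {y}) (spanierProj H) :=
  haveI := hV.discreteTopology_fiber
  haveI : Nonempty (X → SpanierSpace H) := ⟨fun _ => ofPath H A⟩
  haveI : Nonempty (spanierProj H ⁻¹' {y}) := ⟨⟨ofPath H A, spanierProj_ofPath A⟩⟩
  IsOpen.trivializationDiscrete (f := spanierProj H) (fun i => nbhd H (fiberPath i) V) V hV.isOpen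
    (fun _ _ hW => hV.isOpen_iff_isOpen_preimage_inter_nbhd _ hW)
    (fun _ => injOn_spanierProj_nbhd (hV.piSubset _))
    (fun _ => (hV.image_spanierProj_nbhd _).ge)
    hV.pairwise_disjoint_nbhd_fiberPath hV.preimage_subset_iUnion_nbhd_fiberPath

lemma mem_trivialization_baseSet [LocallyPathConnectedSpace X] (hV : IsGoodNbhd H y V)
    (A : Path x y) : y ∈ (hV.trivialization A).baseSet :=
  hV.mem

end IsGoodNbhd

end SpanierSpace

end

/-- If `X` is connected and locally path-connected and `H` is an open normal subgroup
of `π₁(X,x)`, then `p : X̃ → X` is a covering map: every point of `X` has an open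
neighborhood evenly covered by `p`. -/
theorem spanierProj_isCoveringMap_of_open_normal
    {X : Type*} [TopologicalSpace X] [ConnectedSpace X] [LocallyPathConnectedSpace X]
    {x : X} (H : Subgroup (FundamentalGroup X x)) (hnormal : H.Normal)
    (hopen : IsOpen {γ : Path x x | pathClass γ ∈ H}) :
    OldIsCoveringMap (spanierProj H) := by
  intro y
  have : PathConnectedSpace X := pathConnectedSpace_iff_connectedSpace.2 ‹_›
  let A := PathConnectedSpace.somePath x y
  obtain ⟨V, hV⟩ := SpanierSpace.exists_isGoodNbhd hnormal hopen A
  exact ⟨hV.discreteTopology_fiber, hV.trivialization A, hV.mem_trivialization_baseSet A⟩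
end
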